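/- arXiv:2011.09176 — 5 statements merged into one kernel-verified Lean document; each statement's English description precedes it below -/
import Mathlib

section
/- Let q1 and q2 be conjunctive queries over the same schema S with the same tuple of answer variables. Then q1 is contained in q2 (i.e., for every S-database D, every answer to q1 on D is an answer to q2 on D) if and only if there exists a homomorphism from q2 to q1, that is, a function h from the variables of q2 to the variables of q1 that maps every relational atom of q2 to a relational atom of q1 and maps the answer variables of q2 to the corresponding answer variables of q1. -/
/-- A relational schema: a collection of relation names with arities. -/
structure Schema : Type 1 where
  Rel : Type
  arity : Rel → ℕ

/-- A fact over schema `S` with constants from `C`. -/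
def Fct (S : Schema) (C : Type) : Type := (R : S.Rel) × (Fin (S.arity R) → C)

/-- Apply a function on constants to a fact. -/
def mapFct {S : Schema} {C D : Type} (h : C → D) (f : Fct S C) : Fct S D :=
  ⟨f.1, h ∘ f.2⟩

/-- A database over schema `S` with constants from `C`: a set of facts. -/
abbrev DB (S : Schema) (C : Type) : Type := Set (Fct S C)

/-- A conjunctive query over schema `S` with `n` answer variables. -/
structure CQ (S : Schema) (n : ℕ) : Type 1 where
  V : Type
  ansVar : Fin n → V
  atoms : DB S V

/-- `t` is an answer to the CQ `q` on the database `D`. -/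
def cqAns {S : Schema} {n : ℕ} (q : CQ S n) {C : Type} (D : DB S C) (t : Fin n → C) : Prop :=
  ∃ h : q.V → C, (∀ a ∈ q.atoms, mapFct h a ∈ D) ∧ h ∘ q.ansVar = t

/-- A (possibly infinitary) union of conjunctive queries. -/
abbrev UCQ (S : Schema) (n : ℕ) : Type 1 := Set (CQ S n)

/-- `t` is an answer to the UCQ `q` on the database `D`. -/
def ucqAns {S : Schema} {n : ℕ} (q : UCQ S n) {C : Type} (D : DB S C) (t : Fin n → C) : Prop :=
  ∃ p ∈ q, cqAns p D t

/-- Containment of UCQs over all databases of the schema. -/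
def Contained {S : Schema} {n : ℕ} (q1 q2 : UCQ S n) : Prop :=
  ∀ (C : Type) (D : DB S C) (t : Fin n → C), ucqAns q1 D t → ucqAns q2 D t

/-- A homomorphism from the CQ `q` to the CQ `p` (preserving atoms and answer variables). -/
def CQHom {S : Schema} {n : ℕ} (q p : CQ S n) : Prop :=
  ∃ h : q.V → p.V, (∀ a ∈ q.atoms, mapFct h a ∈ p.atoms) ∧ h ∘ q.ansVar = p.ansVar

/-! A homomorphism `q₂ → q₁` is exactly an answer of `q₂` on `q₁` read as a database, with the
answer variables of `q₁` as the answer tuple. Since `q₁` has that tuple as an answer on itself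
(via the identity), containment yields the homomorphism. Conversely, answers are preserved under
maps of databases, and an answer of `q₁` on `D` is such a map from `q₁` into `D`. -/

section

variable {S : Schema} {n : ℕ}

theorem cqAns_canonical (q : CQ S n) : cqAns q q.atoms q.ansVar :=
  ⟨id, fun _ ha => ha, rfl⟩

theorem cqHom_iff_cqAns (q p : CQ S n) : CQHom q p ↔ cqAns q p.atoms p.ansVar :=
  Iff.rfl

theorem cqAns.map {q : CQ S n} {C E : Type} {D : DB S C} {D' : DB S E} {t : Fin n → C}
    (ht : cqAns q D t) (g : C → E) (hg : ∀ a ∈ D, mapFct g a ∈ D') :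
    cqAns q D' (g ∘ t) := by
  obtain ⟨h, hatoms, rfl⟩ := ht
  exact ⟨g ∘ h, fun a ha => hg _ (hatoms a ha), rfl⟩

theorem CQHom.cqAns {q p : CQ S n} (hqp : CQHom q p) {C : Type} {D : DB S C}
    {t : Fin n → C} (ht : cqAns p D t) : cqAns q D t := by
  obtain ⟨g, hgatoms, rfl⟩ := ht
  exact ((cqHom_iff_cqAns q p).mp hqp).map g hgatoms

end

theorem cq_containment_iff_hom (S : Schema) (n : ℕ) (q1 q2 : CQ S n) :
    (∀ (C : Type) (D : DB S C) (t : Fin n → C), cqAns q1 D t → cqAns q2 D t) ↔ CQHom q2 q1 :=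
  ⟨fun H => (cqHom_iff_cqAns q2 q1).mpr (H q1.V q1.atoms q1.ansVar (cqAns_canonical q1)),
    fun hom _ _ _ => hom.cqAns⟩
end

section
/- Let S_1=(O_1,M,S) and S_2=(O_2,M,S) be OBDA specifications with the same GAV mappings and source schema, with FO ontologies satisfying O_1 ⊨ O_2 (every model of O_1 is a model of O_2). If a source UCQ q_s is UCQ-expressible in S_1, then q_s is UCQ-expressible in S_2. In other words, logically weakening the ontology never destroys expressibility of source queries. -/
/-- A GAV mapping from schema `S` to schema `T`: a CQ body over `S` (with variable
type `B`) and a single head atom over `T` whose variables occur in the body. -/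
structure GAV (S T : Schema) : Type 1 where
  B : Type
  body : DB S B
  headR : T.Rel
  headV : Fin (T.arity headR) → B

/-- The head atom of a GAV mapping, as a fact over its body variables. -/
def GAV.headFct {S T : Schema} (m : GAV S T) : Fct T m.B := ⟨m.headR, m.headV⟩

/-- Forward application of a set of GAV mappings to a database (or a CQ viewed as one). -/
def applyM {S T : Schema} (M : Set (GAV S T)) {C : Type} (D : DB S C) : DB T C :=
  { f | ∃ m ∈ M, ∃ h : m.B → C, (∀ a ∈ m.body, mapFct h a ∈ D) ∧ f = mapFct h m.headFct }

/-- Forward application of GAV mappings to a CQ (viewed as a database, keeping answer variables). -/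
def applyMCQ {S T : Schema} (M : Set (GAV S T)) {n : ℕ} (q : CQ S n) : CQ T n :=
  ⟨q.V, q.ansVar, applyM M q.atoms⟩

/-- Forward application of GAV mappings to a UCQ, disjunct by disjunct. -/
def applyMUCQ {S T : Schema} (M : Set (GAV S T)) {n : ℕ} (q : UCQ S n) : UCQ T n :=
  { p | ∃ r ∈ q, p = applyMCQ M r }

/-- Variables of a backward-translated CQ: the original variables plus a fresh copy
of the body variables of the chosen mapping, for each atom. -/
abbrev backV {S T : Schema} {n : ℕ} (q : CQ T n) (c : q.atoms → GAV S T) : Type :=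
  q.V ⊕ (α : q.atoms) × (c α).B

/-- The CQ obtained from `q` by applying backwards, at each atom `α`, the chosen
mapping `c α` along the unifier `u α`. -/
def backCQ {S T : Schema} {n : ℕ} (q : CQ T n) (c : q.atoms → GAV S T)
    (u : (α : q.atoms) → (c α).B → backV q c) : CQ S n where
  V := backV q c
  ansVar := Sum.inl ∘ q.ansVar
  atoms := { f | ∃ α : q.atoms, ∃ a ∈ (c α).body, f = mapFct (u α) a }

/-- `p` is a disjunct of `M⁻(q)`: it arises by choosing for each atom of `q` a suitable
mapping of `M`, instantiating its body along the most general unifier of its head with the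
atom, and using fresh variables for all body variables not occurring in the head. -/
def IsBackDisjunct {S T : Schema} {n : ℕ} (M : Set (GAV S T)) (q : CQ T n) (p : CQ S n) : Prop :=
  ∃ (c : q.atoms → GAV S T) (u : (α : q.atoms) → (c α).B → backV q c),
    (∀ α, c α ∈ M) ∧
    (∀ α : q.atoms, mapFct (u α) (c α).headFct =
      mapFct (fun v => (Sum.inl v : backV q c)) α.1) ∧
    (∀ (α : q.atoms) (b : (c α).B), (∀ i, (c α).headV i ≠ b) → u α b = Sum.inr ⟨α, b⟩) ∧
    p = backCQ q c u

/-- Backward application `M⁻` of a set of GAV mappings to a (possibly infinitary) UCQ. -/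
def backUCQ {S T : Schema} {n : ℕ} (M : Set (GAV S T)) (r : UCQ T n) : UCQ S n :=
  { p | ∃ q ∈ r, IsBackDisjunct M q p }

/-- An ontology over schema `T`, taken semantically: the class of its models, i.e.
a class of (possibly infinite) `T`-databases over arbitrary domains. -/
def Ontology (T : Schema) : Type 1 := (C : Type) → DB T C → Prop

/-- `t` is a certain answer to the OMQ `(O, T, q)` on the ABox `A`: in every model of
`A` and `O` (an interpretation into which `A` maps homomorphically via the
interpretation `ι` of its constants), `ι ∘ t` is an answer to `q`. -/
def certAns {T : Schema} {n : ℕ} (O : Ontology T) (q : UCQ T n) {C : Type}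
    (A : DB T C) (t : Fin n → C) : Prop :=
  ∀ (E : Type) (I : DB T E) (ι : C → E),
    (∀ f ∈ A, mapFct ι f ∈ I) → O E I → ucqAns q I (ι ∘ t)

/-- `qr` is a (possibly infinitary) UCQ rewriting of the OMQ `(O, T, q)`: on every
ABox, the answers to `qr` coincide with the certain answers of the OMQ. -/
def IsRewriting {T : Schema} {n : ℕ} (O : Ontology T) (q qr : UCQ T n) : Prop :=
  ∀ (C : Type) (A : DB T C) (t : Fin n → C), ucqAns qr A t ↔ certAns O q A t

/-- `qt` is a realization of the source query `qs` in the OBDA specification `(O, M, S)`: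
for every source database `D`, the answers to `qs` on `D` coincide with the certain
answers to the OMQ `(O, sch(M), qt)` on `M(D)`. -/
def IsRealization {S T : Schema} {n : ℕ} (O : Ontology T) (M : Set (GAV S T))
    (qs : UCQ S n) (qt : UCQ T n) : Prop :=
  ∀ (C : Type) (D : DB S C) (t : Fin n → C), ucqAns qs D t ↔ certAns O qt (applyM M D) t

/-!
Whenever `q_s` has some realization `q_t` under `O`, its forward image `M(q_s)` is one as well:
`q_s`-answers on `D` give `M(q_s)`-answers on `M(D)`, hence certain answers for any ontology;
conversely, if `M(q_s)` holds in a model `I` via a disjunct `M(p)`, then the canonical database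
of `p` satisfies `q_s`, so `q_t` is certain on `M(p)` and transfers to `I` along the match.
The half "certain answers to `M(q_s)` are `q_s`-answers" only gets easier when the ontology is
weakened, since certain answers under `O₂` are certain under the stronger `O₁`.
-/

theorem mapFct_id {S : Schema} {C : Type} (f : Fct S C) : mapFct id f = f :=
  rfl

theorem cqAns_self {S : Schema} {n : ℕ} (p : CQ S n) : cqAns p p.atoms p.ansVar :=
  ⟨id, fun a ha => by rwa [mapFct_id], rfl⟩

theorem cqAns.map_s8 {S : Schema} {n : ℕ} {p : CQ S n} {C E : Type} {A : DB S C} {I : DB S E}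
    {t : Fin n → C} (h : cqAns p A t) (ι : C → E) (hι : ∀ f ∈ A, mapFct ι f ∈ I) :
    cqAns p I (ι ∘ t) := by
  obtain ⟨g, hg, rfl⟩ := h
  exact ⟨ι ∘ g, fun a ha => hι _ (hg a ha), rfl⟩

theorem ucqAns.map_s8 {S : Schema} {n : ℕ} {q : UCQ S n} {C E : Type} {A : DB S C} {I : DB S E}
    {t : Fin n → C} (h : ucqAns q A t) (ι : C → E) (hι : ∀ f ∈ A, mapFct ι f ∈ I) :
    ucqAns q I (ι ∘ t) := by
  obtain ⟨p, hp, hpA⟩ := h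
  exact ⟨p, hp, hpA.map_s8 ι hι⟩

theorem certAns_of_ucqAns {T : Schema} {n : ℕ} (O : Ontology T) {q : UCQ T n} {C : Type}
    {A : DB T C} {t : Fin n → C} (h : ucqAns q A t) : certAns O q A t :=
  fun _ _ ι hι _ => h.map_s8 ι hι

theorem certAns.anti_ontology {T : Schema} {n : ℕ} {O₁ O₂ : Ontology T}
    (hent : ∀ (C : Type) (I : DB T C), O₁ C I → O₂ C I) {q : UCQ T n} {C : Type}
    {A : DB T C} {t : Fin n → C} (h : certAns O₂ q A t) : certAns O₁ q A t :=
  fun E I ι hι hO => h E I ι hι (hent E I hO)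

theorem applyM_map {S T : Schema} (M : Set (GAV S T)) {C E : Type} {D : DB S C} {D' : DB S E}
    (ι : C → E) (hι : ∀ f ∈ D, mapFct ι f ∈ D') :
    ∀ f ∈ applyM M D, mapFct ι f ∈ applyM M D' := by
  rintro _ ⟨m, hm, h, hbody, rfl⟩
  exact ⟨m, hm, ι ∘ h, fun a ha => hι _ (hbody a ha), rfl⟩

theorem cqAns_applyMCQ {S T : Schema} (M : Set (GAV S T)) {n : ℕ} {p : CQ S n} {C : Type}
    {D : DB S C} {t : Fin n → C} (h : cqAns p D t) :
    cqAns (applyMCQ M p) (applyM M D) t := by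
  obtain ⟨g, hg, rfl⟩ := h
  exact ⟨g, applyM_map M g hg, rfl⟩

theorem ucqAns_applyMUCQ {S T : Schema} (M : Set (GAV S T)) {n : ℕ} {q : UCQ S n} {C : Type}
    {D : DB S C} {t : Fin n → C} (h : ucqAns q D t) :
    ucqAns (applyMUCQ M q) (applyM M D) t := by
  obtain ⟨p, hp, hpD⟩ := h
  exact ⟨applyMCQ M p, ⟨p, hp, rfl⟩, cqAns_applyMCQ M hpD⟩

section Realization

variable {S T : Schema} {n : ℕ} {O : Ontology T} {M : Set (GAV S T)} {qs : UCQ S n}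

theorem IsRealization.certAns_of_certAns_applyMUCQ {qt : UCQ T n} (hqt : IsRealization O M qs qt)
    {C : Type} {A : DB T C} {t : Fin n → C} (h : certAns O (applyMUCQ M qs) A t) :
    certAns O qt A t := by
  intro E I ι hι hO
  obtain ⟨_, ⟨p, hp, rfl⟩, g, hg, hgt⟩ := h E I ι hι hO
  have hqt_p : certAns O qt (applyM M p.atoms) p.ansVar :=
    (hqt _ _ _).mp ⟨p, hp, cqAns_self p⟩
  exact hgt ▸ hqt_p E I g hg hO

theorem isRealization_applyMUCQ {qt : UCQ T n} (hqt : IsRealization O M qs qt) :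
    IsRealization O M qs (applyMUCQ M qs) := fun C D t =>
  ⟨fun h => certAns_of_ucqAns O (ucqAns_applyMUCQ M h),
    fun h => (hqt C D t).mpr (hqt.certAns_of_certAns_applyMUCQ h)⟩

theorem IsRealization.applyMUCQ_anti_ontology {O₁ O₂ : Ontology T}
    (hent : ∀ (C : Type) (I : DB T C), O₁ C I → O₂ C I)
    (h : IsRealization O₁ M qs (applyMUCQ M qs)) :
    IsRealization O₂ M qs (applyMUCQ M qs) := fun C D t =>
  ⟨fun hqs => certAns_of_ucqAns O₂ (ucqAns_applyMUCQ M hqs),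
    fun hc => (h C D t).mpr (hc.anti_ontology hent)⟩

end Realization

theorem expressibility_monotone_in_ontology (S T : Schema) (n : ℕ)
    (O1 O2 : Ontology T) (M : Set (GAV S T)) (qs : UCQ S n)
    (hent : ∀ (C : Type) (I : DB T C), O1 C I → O2 C I)
    (hexp : ∃ qt : UCQ T n, IsRealization O1 M qs qt) :
    ∃ qt : UCQ T n, IsRealization O2 M qs qt := by
  obtain ⟨qt, hqt⟩ := hexp
  exact ⟨applyMUCQ M qs, (isRealization_applyMUCQ hqt).applyMUCQ_anti_ontology hent⟩
end

section
/- Let Q=(O,T,q) be an OMQ with O formulated in first-order logic with equality, q a UCQ, and q_r an infinitary UCQ rewriting of Q. Then the OMQ (O,T,q_r), obtained by replacing the query by its own rewriting, is contained in q_r: for every T-ABox A, every certain answer to (O,T,q_r) on A is already a plain answer to q_r on A. -/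
-- A model of `O`, read as an ABox, is one of its own models via the identity interpretation.
theorem ucqAns_of_certAns_of_model {T : Schema} {n : ℕ} {O : Ontology T} {q : UCQ T n} {E : Type}
    {I : DB T E} (hI : O E I) {u : Fin n → E} (h : certAns O q I u) : ucqAns q I u :=
  h E I id (fun _ hf => hf) hI

theorem certAns_of_certAns_rewriting {T : Schema} {n : ℕ} {O : Ontology T} {q qr : UCQ T n}
    (hqr : IsRewriting O q qr) {C : Type} {A : DB T C} {t : Fin n → C}
    (h : certAns O qr A t) : certAns O q A t := fun E I ι hA hI =>
  ucqAns_of_certAns_of_model hI ((hqr E I (ι ∘ t)).mp (h E I ι hA hI))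

theorem omq_of_rewriting_contained_in_rewriting (T : Schema) (k : ℕ) (O : Ontology T)
    (q : UCQ T k) (qr : UCQ T k) (hqr : IsRewriting O q qr) :
    ∀ (C : Type) (A : DB T C) (t : Fin k → C), certAns O qr A t → ucqAns qr A t :=
  fun C A t h => (hqr C A t).mpr (certAns_of_certAns_rewriting hqr h)
end

section
/- Let O be an ELHI ontology, Q=(O,S,q) an OMQ with q a UCQ, A an S-ABox, and a a certain answer to Q on A. Then there exists a pseudo tree-shaped S-ABox A' with a tuple a' in its core such that: (1) the core of A' has size at most |q| and the outdegree of A' is at most |O|; (2) a' is a certain answer to Q on A'; and (3) there is a homomorphism h from A' to A with h(a')=a. -/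
/-- A role: a role name or an inverse role. -/
inductive Role (RN : Type) : Type
  | name (r : RN)
  | inv (r : RN)

/-- The role name underlying a role. -/
def Role.base {RN : Type} : Role RN → RN
  | .name r => r
  | .inv r => r

/-- A DL interpretation over concept names `CN` and role names `RN`. -/
structure Interp (CN RN : Type) : Type 1 where
  Δ : Type
  cn : CN → Set Δ
  rn : RN → Set (Δ × Δ)

/-- Semantics of roles. -/
def Interp.role {CN RN : Type} (I : Interp CN RN) : Role RN → Set (I.Δ × I.Δ)
  | .name r => I.rn r
  | .inv r => { p | (p.2, p.1) ∈ I.rn r }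

/-- ELI concepts: `⊤`, concept names, conjunction and existential restrictions
`∃r.C` over (possibly inverse) roles. -/
inductive Conc (CN RN : Type) : Type
  | top
  | name (A : CN)
  | conj (C D : Conc CN RN)
  | ex (r : Role RN) (C : Conc CN RN)

/-- Semantics of ELI concepts. -/
def Conc.sem {CN RN : Type} (I : Interp CN RN) : Conc CN RN → Set I.Δ
  | .top => Set.univ
  | .name A => I.cn A
  | .conj C D => C.sem I ∩ D.sem I
  | .ex r C => { d | ∃ e, (d, e) ∈ I.role r ∧ e ∈ C.sem I }

/-- ELHI ontology axioms: concept inclusions `C ⊑ D` and role inclusions `r ⊑ s`. -/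
inductive Ax (CN RN : Type) : Type
  | ci (C D : Conc CN RN)
  | ri (r s : Role RN)

/-- Satisfaction of an axiom in an interpretation. -/
def satAx {CN RN : Type} (I : Interp CN RN) : Ax CN RN → Prop
  | .ci C D => C.sem I ⊆ D.sem I
  | .ri r s => ∀ p ∈ I.role r, p ∈ I.role s

/-- Concept names occurring in a concept. -/
def Conc.cnames {CN RN : Type} : Conc CN RN → Set CN
  | .top => ∅
  | .name A => {A}
  | .conj C D => C.cnames ∪ D.cnames
  | .ex _ C => C.cnames

/-- Role names occurring in a concept. -/
def Conc.rnames {CN RN : Type} : Conc CN RN → Set RN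
  | .top => ∅
  | .name _ => ∅
  | .conj C D => C.rnames ∪ D.rnames
  | .ex r C => insert r.base C.rnames

/-- Concept names occurring in an axiom. -/
def Ax.cnames {CN RN : Type} : Ax CN RN → Set CN
  | .ci C D => C.cnames ∪ D.cnames
  | .ri _ _ => ∅

/-- Size (number of symbols) of a concept. -/
def Conc.size {CN RN : Type} : Conc CN RN → ℕ
  | .top => 1
  | .name _ => 1
  | .conj C D => C.size + D.size + 1
  | .ex _ C => C.size + 2

/-- Size of an axiom. -/
def Ax.size {CN RN : Type} : Ax CN RN → ℕ
  | .ci C D => C.size + D.size + 1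
  | .ri _ _ => 3

/-- Size of an ontology. -/
def ontoSize {CN RN : Type} (O : List (Ax CN RN)) : ℕ := (O.map Ax.size).sum

/-- An ABox over constants `C`: concept facts `A(c)` and role facts `r(c, c')`. -/
structure ABox (CN RN C : Type) : Type where
  cf : Set (CN × C)
  rf : Set (RN × C × C)

/-- The active domain of an ABox. -/
def adom {CN RN C : Type} (A : ABox CN RN C) : Set C :=
  { c | (∃ B, (B, c) ∈ A.cf) ∨ ∃ r x y, (r, x, y) ∈ A.rf ∧ (c = x ∨ c = y) }

/-- `(I, ι)` is a model of the ABox `A` and the ontology `O`. -/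
def IsModel {CN RN C : Type} (I : Interp CN RN) (ι : C → I.Δ)
    (A : ABox CN RN C) (O : List (Ax CN RN)) : Prop :=
  (∀ p ∈ A.cf, ι p.2 ∈ I.cn p.1) ∧
  (∀ t ∈ A.rf, (ι t.2.1, ι t.2.2) ∈ I.rn t.1) ∧
  (∀ ax ∈ O, satAx I ax)

/-- A conjunctive query over a DL schema, with `n` answer variables and `nv`
variables altogether. -/
structure DLCQ (CN RN : Type) (n : ℕ) : Type where
  nv : ℕ
  ansVar : Fin n → Fin nv
  cat : List (CN × Fin nv)
  rat : List (RN × Fin nv × Fin nv)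

/-- Size of a DL conjunctive query. -/
def DLCQ.size {CN RN : Type} {n : ℕ} (q : DLCQ CN RN n) : ℕ :=
  q.nv + q.cat.length + q.rat.length

/-- Size of a UCQ given as a list of CQ disjuncts. -/
def ucqSize {CN RN : Type} {n : ℕ} (L : List (DLCQ CN RN n)) : ℕ :=
  (L.map DLCQ.size).sum

/-- `t` is an answer to the CQ `q` in the interpretation `I`. -/
def cqMatch {CN RN : Type} {n : ℕ} (q : DLCQ CN RN n) (I : Interp CN RN)
    (t : Fin n → I.Δ) : Prop :=
  ∃ h : Fin q.nv → I.Δ,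
    (∀ p ∈ q.cat, h p.2 ∈ I.cn p.1) ∧
    (∀ p ∈ q.rat, (h p.2.1, h p.2.2) ∈ I.rn p.1) ∧
    ∀ i, h (q.ansVar i) = t i

/-- `t` is an answer to the CQ `q` on the ABox `A` (viewed as a database). -/
def cqMatchABox {CN RN C : Type} {n : ℕ} (q : DLCQ CN RN n) (A : ABox CN RN C)
    (t : Fin n → C) : Prop :=
  ∃ h : Fin q.nv → C,
    (∀ p ∈ q.cat, (p.1, h p.2) ∈ A.cf) ∧
    (∀ p ∈ q.rat, (p.1, h p.2.1, h p.2.2) ∈ A.rf) ∧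
    ∀ i, h (q.ansVar i) = t i

/-- `t` is a certain answer to the OMQ `(O, q)` (with `q` a UCQ) on the ABox `A`. -/
def certUCQ {CN RN C : Type} {n : ℕ} (O : List (Ax CN RN)) (q : List (DLCQ CN RN n))
    (A : ABox CN RN C) (t : Fin n → C) : Prop :=
  ∀ (J : Interp CN RN) (ι : C → J.Δ), IsModel J ι A O →
    ∃ p ∈ q, cqMatch p J (ι ∘ t)
/-!
A certain answer is witnessed by a match of some disjunct of `q` into the chase of `A` under `O`,
whose elements are constants of `A` followed by paths of anonymous witnesses. The core of `A'`
has one constant per query variable, copying the constant below which the variable is matched,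
and copies the role facts of `A` between these constants. Below a node copying `c`, the tree has,
for each existential restriction `∃ρ.C` on a left-hand side of `O`, a child copying some `c'`
that satisfies `C` and is linked to `c` by an ABox fact entailing `ρ`; as nodes copy constants,
`A'` maps homomorphically to `A`. Every derivation of the chase of `A` transfers to each copy of
its constant in `A'`: the only step leaving the tree below a constant, an edge `ρ(c, c')` used to
satisfy `∃ρ.C`, is redirected to the child for `∃ρ.C`. Choosing witnesses of minimal
derivation height makes this an induction on height. Hence the match transfers into the chase of
`A'`, which maps into every model of `A'` and `O`.
-/

namespace Role

variable {RN : Type}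

def inverse : Role RN → Role RN
  | .name r => .inv r
  | .inv r => .name r

@[simp]
theorem inverse_inverse (ρ : Role RN) : ρ.inverse.inverse = ρ := by
  cases ρ <;> rfl

def fact {α : Type} : Role RN → α → α → RN × α × α
  | .name r, x, y => (r, x, y)
  | .inv r, x, y => (r, y, x)

theorem fact_inverse {α : Type} (ρ : Role RN) (x y : α) : ρ.inverse.fact x y = ρ.fact y x := by
  cases ρ <;> rfl

theorem fact_map {α β : Type} (f : α → β) (ρ : Role RN) (x y : α) :
    ρ.fact (f x) (f y) = ((ρ.fact x y).1, f (ρ.fact x y).2.1, f (ρ.fact x y).2.2) := by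
  cases ρ <;> rfl

theorem fact_parent_child_inj {κ ι : Type} {ρ σ : Role RN} {k k' : κ} {l l' : List ι}
    {i i' : ι} (h : ρ.fact (k, l) (k, l ++ [i]) = σ.fact (k', l') (k', l' ++ [i'])) :
    ρ = σ ∧ k = k' ∧ l = l' ∧ i = i' := by
  cases ρ <;> cases σ <;> simp only [fact, Prod.mk.injEq, Role.name.injEq, Role.inv.injEq,
    reduceCtorEq, false_and] at h ⊢
  all_goals
    obtain ⟨h₁, ⟨hk, h₂⟩, -, h₃⟩ := h
    have := congrArg List.length h₂
    have := congrArg List.length h₃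
    simp_all

theorem fact_eq_cases {α : Type} {ρ : Role RN} {r : RN} {x y a b : α}
    (h : (r, x, y) = ρ.fact a b) : x = a ∧ y = b ∨ x = b ∧ y = a := by
  cases ρ <;> simp only [Role.fact, Prod.mk.injEq] at h <;> tauto

end Role

section SubRole

variable {CN RN : Type}

/-- The role inclusions entailed by `O`; an axiom `σ ⊑ τ` also yields `σ⁻ ⊑ τ⁻`. -/
inductive SubRole (O : List (Ax CN RN)) : Role RN → Role RN → Prop
  | refl (ρ : Role RN) : SubRole O ρ ρ
  | tail {ρ σ τ : Role RN} : SubRole O ρ σ → Ax.ri σ τ ∈ O → SubRole O ρ τ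
  | tail_inverse {ρ σ τ : Role RN} :
      SubRole O ρ σ.inverse → Ax.ri σ τ ∈ O → SubRole O ρ τ.inverse

theorem SubRole.inverse {O : List (Ax CN RN)} {ρ σ : Role RN} (h : SubRole O ρ σ) :
    SubRole O ρ.inverse σ.inverse := by
  induction h with
  | refl => exact .refl _
  | tail _ hax ih => exact .tail_inverse ih hax
  | tail_inverse _ hax ih => simpa using SubRole.tail (by simpa using ih) hax

end SubRole

section Existentials

variable {CN RN : Type}

def Conc.existentials : Conc CN RN → List (Role RN × Conc CN RN)
  | .top => []
  | .name _ => []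
  | .conj C D => C.existentials ++ D.existentials
  | .ex ρ C => (ρ, C) :: C.existentials

theorem Conc.length_existentials_le (C : Conc CN RN) : C.existentials.length ≤ C.size := by
  induction C with
  | top | name => simp [existentials, size]
  | conj C D ihC ihD => simp only [existentials, size, List.length_append]; omega
  | ex ρ C ih => simp only [existentials, size, List.length_cons]; omega

def lhsExistentials (O : List (Ax CN RN)) : List (Role RN × Conc CN RN) :=
  O.flatMap fun
    | .ci C _ => C.existentials
    | .ri _ _ => []

theorem length_lhsExistentials_le (O : List (Ax CN RN)) :
    (lhsExistentials O).length ≤ ontoSize O := by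
  rw [lhsExistentials, ontoSize, List.length_flatMap]
  refine List.sum_le_sum fun ax _ => ?_
  cases ax with
  | ci C D => have := C.length_existentials_le; simp only [Ax.size]; omega
  | ri => simp [Ax.size]

theorem existentials_subset_lhsExistentials {O : List (Ax CN RN)} {C D : Conc CN RN}
    (hax : Ax.ci C D ∈ O) : C.existentials ⊆ lhsExistentials O :=
  fun _ h => List.mem_flatMap.2 ⟨_, hax, h⟩

end Existentials

theorem DLCQ.nv_le_ucqSize {CN RN : Type} {n : ℕ} {q : List (DLCQ CN RN n)} {p : DLCQ CN RN n}
    (hp : p ∈ q) : p.nv ≤ ucqSize q :=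
  calc p.nv ≤ p.size := by simp only [DLCQ.size]; omega
    _ ≤ ucqSize q := List.le_sum_of_mem (List.mem_map_of_mem hp)

theorem Function.exists_fiber_representative {α β : Type*} (f : α → β) :
    ∃ g : α → α, (∀ a, f (g a) = f a) ∧ ∀ a b, f a = f b → g a = g b :=
  ⟨fun a => (⟨a, rfl⟩ : ∃ x, f x = f a).choose,
    fun a => (⟨a, rfl⟩ : ∃ x, f x = f a).choose_spec, fun a b h => by simp only [h]⟩

namespace Chase

variable {CN RN K : Type}

/-- An element of the chase: a constant followed by a path of anonymous elements, each created
as the witness of the existential restriction `∃ρ.C` it is labelled with. -/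
abbrev Elem (CN RN K : Type) : Type := K × List (Role RN × Conc CN RN)

def Elem.push (d : Elem CN RN K) (ρ : Role RN) (C : Conc CN RN) : Elem CN RN K :=
  (d.1, d.2 ++ [(ρ, C)])

/-- `satisfied d C`: the derived facts around `d` satisfy `C`;
`required d C`: the ontology requires `d` to satisfy `C`. -/
inductive Judgment (CN RN K : Type) : Type
  | conceptFact (d : Elem CN RN K) (A : CN)
  | roleFact (d e : Elem CN RN K) (r : RN)
  | satisfied (d : Elem CN RN K) (C : Conc CN RN)
  | required (d : Elem CN RN K) (C : Conc CN RN)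

def Judgment.roleEdge (ρ : Role RN) (d e : Elem CN RN K) : Judgment CN RN K :=
  match ρ with
  | .name r => .roleFact d e r
  | .inv r => .roleFact e d r

theorem Judgment.roleEdge_inverse (ρ : Role RN) (d e : Elem CN RN K) :
    roleEdge ρ.inverse d e = roleEdge ρ e d := by
  cases ρ <;> rfl

open Judgment

/-- The chase of `B` under `O` as a calculus, with `n` bounding the height of derivations. -/
inductive DerivableIn (O : List (Ax CN RN)) (B : ABox CN RN K) : ℕ → Judgment CN RN K → Prop
  | conceptFact_of_mem {n A c} : (A, c) ∈ B.cf → DerivableIn O B n (.conceptFact (c, []) A)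
  | roleFact_of_mem {n r x y} : (r, x, y) ∈ B.rf →
      DerivableIn O B n (.roleFact (x, []) (y, []) r)
  | conceptFact_of_required {n d A} : DerivableIn O B n (.required d (.name A)) →
      DerivableIn O B (n + 1) (.conceptFact d A)
  | roleEdge_of_ri {n ρ σ d e} : Ax.ri ρ σ ∈ O → DerivableIn O B n (roleEdge ρ d e) →
      DerivableIn O B (n + 1) (roleEdge σ d e)
  | roleEdge_push {n d ρ C} : DerivableIn O B n (.required d (.ex ρ C)) →
      DerivableIn O B (n + 1) (roleEdge ρ d (d.push ρ C))
  | satisfied_top {n d} : DerivableIn O B n (.satisfied d .top)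
  | satisfied_name {n d A} : DerivableIn O B n (.conceptFact d A) →
      DerivableIn O B (n + 1) (.satisfied d (.name A))
  | satisfied_conj {n d C D} : DerivableIn O B n (.satisfied d C) →
      DerivableIn O B n (.satisfied d D) → DerivableIn O B (n + 1) (.satisfied d (.conj C D))
  | satisfied_ex {n d e ρ C} : DerivableIn O B n (roleEdge ρ d e) →
      DerivableIn O B n (.satisfied e C) → DerivableIn O B (n + 1) (.satisfied d (.ex ρ C))
  | required_of_ci {n d C D} : Ax.ci C D ∈ O → DerivableIn O B n (.satisfied d C) →
      DerivableIn O B (n + 1) (.required d D)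
  | required_conj_left {n d C D} : DerivableIn O B n (.required d (.conj C D)) →
      DerivableIn O B (n + 1) (.required d C)
  | required_conj_right {n d C D} : DerivableIn O B n (.required d (.conj C D)) →
      DerivableIn O B (n + 1) (.required d D)
  | required_push {n d ρ C} : DerivableIn O B n (.required d (.ex ρ C)) →
      DerivableIn O B (n + 1) (.required (d.push ρ C) C)

def Derivable (O : List (Ax CN RN)) (B : ABox CN RN K) (j : Judgment CN RN K) : Prop :=
  ∃ n, DerivableIn O B n j

variable {O : List (Ax CN RN)} {B : ABox CN RN K}

theorem DerivableIn.succ {n : ℕ} {j : Judgment CN RN K} (h : DerivableIn O B n j) :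
    DerivableIn O B (n + 1) j := by
  induction h with
  | conceptFact_of_mem h => exact .conceptFact_of_mem h
  | roleFact_of_mem h => exact .roleFact_of_mem h
  | conceptFact_of_required _ ih => exact .conceptFact_of_required ih
  | roleEdge_of_ri hax _ ih => exact .roleEdge_of_ri hax ih
  | roleEdge_push _ ih => exact .roleEdge_push ih
  | satisfied_top => exact .satisfied_top
  | satisfied_name _ ih => exact .satisfied_name ih
  | satisfied_conj _ _ ih ih' => exact .satisfied_conj ih ih'
  | satisfied_ex _ _ ih ih' => exact .satisfied_ex ih ih'
  | required_of_ci hax _ ih => exact .required_of_ci hax ih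
  | required_conj_left _ ih => exact .required_conj_left ih
  | required_conj_right _ ih => exact .required_conj_right ih
  | required_push _ ih => exact .required_push ih

theorem DerivableIn.mono {n m : ℕ} {j : Judgment CN RN K} (h : DerivableIn O B n j)
    (hnm : n ≤ m) : DerivableIn O B m j := by
  induction m, hnm using Nat.le_induction with
  | base => exact h
  | succ _ _ ih => exact ih.succ

theorem Derivable.exists_common_height {j j' : Judgment CN RN K} (h : Derivable O B j)
    (h' : Derivable O B j') : ∃ n, DerivableIn O B n j ∧ DerivableIn O B n j' :=
  let ⟨n, hn⟩ := h
  let ⟨n', hn'⟩ := h'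
  ⟨max n n', hn.mono (le_max_left n n'), hn'.mono (le_max_right n n')⟩

namespace Derivable

theorem conceptFact_of_mem {A : CN} {c : K} (h : (A, c) ∈ B.cf) :
    Derivable O B (.conceptFact (c, []) A) :=
  ⟨0, .conceptFact_of_mem h⟩

theorem roleFact_of_mem {r : RN} {x y : K} (h : (r, x, y) ∈ B.rf) :
    Derivable O B (.roleFact (x, []) (y, []) r) :=
  ⟨0, .roleFact_of_mem h⟩

theorem conceptFact_of_required {d : Elem CN RN K} {A : CN}
    (h : Derivable O B (.required d (.name A))) : Derivable O B (.conceptFact d A) :=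
  let ⟨n, hn⟩ := h; ⟨n + 1, .conceptFact_of_required hn⟩

theorem roleEdge_of_ri {ρ σ : Role RN} {d e : Elem CN RN K} (hax : Ax.ri ρ σ ∈ O)
    (h : Derivable O B (roleEdge ρ d e)) : Derivable O B (roleEdge σ d e) :=
  let ⟨n, hn⟩ := h; ⟨n + 1, .roleEdge_of_ri hax hn⟩

theorem roleEdge_push {d : Elem CN RN K} {ρ : Role RN} {C : Conc CN RN}
    (h : Derivable O B (.required d (.ex ρ C))) : Derivable O B (roleEdge ρ d (d.push ρ C)) :=
  let ⟨n, hn⟩ := h; ⟨n + 1, .roleEdge_push hn⟩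

theorem satisfied_top {d : Elem CN RN K} : Derivable O B (.satisfied d .top) :=
  ⟨0, .satisfied_top⟩

theorem satisfied_name {d : Elem CN RN K} {A : CN} (h : Derivable O B (.conceptFact d A)) :
    Derivable O B (.satisfied d (.name A)) :=
  let ⟨n, hn⟩ := h; ⟨n + 1, .satisfied_name hn⟩

theorem satisfied_conj {d : Elem CN RN K} {C D : Conc CN RN}
    (h : Derivable O B (.satisfied d C)) (h' : Derivable O B (.satisfied d D)) :
    Derivable O B (.satisfied d (.conj C D)) :=
  let ⟨n, hn, hn'⟩ := h.exists_common_height h'; ⟨n + 1, .satisfied_conj hn hn'⟩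

theorem satisfied_ex {d e : Elem CN RN K} {ρ : Role RN} {C : Conc CN RN}
    (h : Derivable O B (roleEdge ρ d e)) (h' : Derivable O B (.satisfied e C)) :
    Derivable O B (.satisfied d (.ex ρ C)) :=
  let ⟨n, hn, hn'⟩ := h.exists_common_height h'; ⟨n + 1, .satisfied_ex hn hn'⟩

theorem required_of_ci {d : Elem CN RN K} {C D : Conc CN RN} (hax : Ax.ci C D ∈ O)
    (h : Derivable O B (.satisfied d C)) : Derivable O B (.required d D) :=
  let ⟨n, hn⟩ := h; ⟨n + 1, .required_of_ci hax hn⟩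

theorem required_conj_left {d : Elem CN RN K} {C D : Conc CN RN}
    (h : Derivable O B (.required d (.conj C D))) : Derivable O B (.required d C) :=
  let ⟨n, hn⟩ := h; ⟨n + 1, .required_conj_left hn⟩

theorem required_conj_right {d : Elem CN RN K} {C D : Conc CN RN}
    (h : Derivable O B (.required d (.conj C D))) : Derivable O B (.required d D) :=
  let ⟨n, hn⟩ := h; ⟨n + 1, .required_conj_right hn⟩

theorem required_push {d : Elem CN RN K} {ρ : Role RN} {C : Conc CN RN}
    (h : Derivable O B (.required d (.ex ρ C))) : Derivable O B (.required (d.push ρ C) C) :=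
  let ⟨n, hn⟩ := h; ⟨n + 1, .required_push hn⟩

theorem roleEdge_of_subRole {ρ₀ ρ : Role RN} {x y : K} (hρ : SubRole O ρ₀ ρ)
    (hf : ρ₀.fact x y ∈ B.rf) : Derivable O B (roleEdge ρ (x, []) (y, [])) := by
  induction hρ with
  | refl => cases ρ₀ <;> exact roleFact_of_mem hf
  | tail _ hax ih => exact roleEdge_of_ri hax ih
  | tail_inverse _ hax ih =>
    rw [roleEdge_inverse] at ih ⊢
    exact roleEdge_of_ri hax ih

end Derivable

variable (O B) in
def model : Interp CN RN where
  Δ := Elem CN RN K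
  cn A := {d | Derivable O B (.conceptFact d A)}
  rn r := {p | Derivable O B (.roleFact p.1 p.2 r)}

theorem mem_role_model {ρ : Role RN} {d e : Elem CN RN K} :
    ((d, e) ∈ (model O B).role ρ) ↔ Derivable O B (roleEdge ρ d e) := by
  cases ρ <;> rfl

theorem mem_sem_model_of_required {C : Conc CN RN} {d : Elem CN RN K}
    (h : Derivable O B (.required d C)) : d ∈ C.sem (model O B) := by
  induction C generalizing d with
  | top => trivial
  | name A => exact h.conceptFact_of_required
  | conj C D ihC ihD => exact ⟨ihC h.required_conj_left, ihD h.required_conj_right⟩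
  | ex ρ C ih => exact ⟨d.push ρ C, mem_role_model.2 h.roleEdge_push, ih h.required_push⟩

theorem satisfied_of_mem_sem_model {C : Conc CN RN} {d : Elem CN RN K}
    (h : d ∈ C.sem (model O B)) : Derivable O B (.satisfied d C) := by
  induction C generalizing d with
  | top => exact .satisfied_top
  | name A => exact .satisfied_name h
  | conj C D ihC ihD => exact .satisfied_conj (ihC h.1) (ihD h.2)
  | ex ρ C ih =>
    obtain ⟨e, hde, he⟩ := h
    exact .satisfied_ex (mem_role_model.1 hde) (ih he)

theorem isModel_model : IsModel (model O B) (fun c => ((c, []) : Elem CN RN K)) B O := by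
  refine ⟨fun _ h => .conceptFact_of_mem h, fun _ h => .roleFact_of_mem h, ?_⟩
  rintro (⟨C, D⟩ | ⟨ρ, σ⟩) hax
  · exact fun d hd =>
      mem_sem_model_of_required (.required_of_ci hax (satisfied_of_mem_sem_model hd))
  · exact fun p hp => mem_role_model.2 (.roleEdge_of_ri hax (mem_role_model.1 hp))

noncomputable def witnessStep (J : Interp CN RN) (x : J.Δ) (ρC : Role RN × Conc CN RN) : J.Δ :=
  open Classical in
  if h : ∃ y, (x, y) ∈ J.role ρC.1 ∧ y ∈ ρC.2.sem J then h.choose else x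

theorem witnessStep_spec {J : Interp CN RN} {x : J.Δ} {ρ : Role RN} {C : Conc CN RN}
    (h : x ∈ (Conc.ex ρ C).sem J) :
    (x, witnessStep J x (ρ, C)) ∈ J.role ρ ∧ witnessStep J x (ρ, C) ∈ C.sem J := by
  have h' : ∃ y, (x, y) ∈ J.role (ρ, C).1 ∧ y ∈ (ρ, C).2.sem J := h
  rw [witnessStep, dif_pos h']
  exact h'.choose_spec

noncomputable def homTo (J : Interp CN RN) (κ : K → J.Δ) (d : Elem CN RN K) : J.Δ :=
  d.2.foldl (witnessStep J) (κ d.1)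

theorem homTo_push {J : Interp CN RN} {κ : K → J.Δ} (d : Elem CN RN K) (ρ : Role RN)
    (C : Conc CN RN) : homTo J κ (d.push ρ C) = witnessStep J (homTo J κ d) (ρ, C) := by
  simp [homTo, Elem.push]

def Judgment.Holds (J : Interp CN RN) (g : Elem CN RN K → J.Δ) : Judgment CN RN K → Prop
  | .conceptFact d A => g d ∈ J.cn A
  | .roleFact d e r => (g d, g e) ∈ J.rn r
  | .satisfied d C => g d ∈ C.sem J
  | .required d C => g d ∈ C.sem J

theorem Judgment.holds_roleEdge {J : Interp CN RN} {g : Elem CN RN K → J.Δ} {ρ : Role RN}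
    {d e : Elem CN RN K} : (roleEdge ρ d e).Holds J g ↔ (g d, g e) ∈ J.role ρ := by
  cases ρ <;> rfl

theorem Derivable.holds_homTo {J : Interp CN RN} {κ : K → J.Δ} (hJ : IsModel J κ B O)
    {j : Judgment CN RN K} (h : Derivable O B j) : j.Holds J (homTo J κ) := by
  obtain ⟨n, h⟩ := h
  induction h with
  | conceptFact_of_mem h => exact hJ.1 _ h
  | roleFact_of_mem h => exact hJ.2.1 _ h
  | conceptFact_of_required _ ih => exact ih
  | roleEdge_of_ri hax _ ih => exact holds_roleEdge.2 (hJ.2.2 _ hax _ (holds_roleEdge.1 ih))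
  | roleEdge_push _ ih =>
    rw [holds_roleEdge, homTo_push]
    exact (witnessStep_spec ih).1
  | satisfied_top => trivial
  | satisfied_name _ ih => exact ih
  | satisfied_conj _ _ ih ih' => exact ⟨ih, ih'⟩
  | satisfied_ex _ _ ih ih' => exact ⟨_, holds_roleEdge.1 ih, ih'⟩
  | required_of_ci hax _ ih => exact hJ.2.2 _ hax ih
  | required_conj_left _ ih => exact ih.1
  | required_conj_right _ ih => exact ih.2
  | required_push _ ih =>
    rw [Holds, homTo_push]
    exact (witnessStep_spec ih).2

def TreeAdjacent (d e : Elem CN RN K) : Prop :=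
  d.1 = e.1 ∧ ((∃ x, e.2 = d.2 ++ [x]) ∨ ∃ x, d.2 = e.2 ++ [x])

theorem TreeAdjacent.symm {d e : Elem CN RN K} (h : TreeAdjacent d e) : TreeAdjacent e d :=
  ⟨h.1.symm, h.2.symm⟩

theorem TreeAdjacent.not_core {d e : Elem CN RN K} (h : TreeAdjacent d e) :
    ¬(d.2 = [] ∧ e.2 = []) := by
  rintro ⟨hd, he⟩
  rcases h.2 with ⟨x, hx⟩ | ⟨x, hx⟩ <;> simp [hd, he] at hx

variable (O B) in
def EdgeOrigin : Judgment CN RN K → Prop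
  | .roleFact d e r => TreeAdjacent d e ∨
      d.2 = [] ∧ e.2 = [] ∧ ∃ ρ₀, SubRole O ρ₀ (.name r) ∧ ρ₀.fact d.1 e.1 ∈ B.rf
  | _ => True

theorem edgeOrigin_roleEdge {ρ : Role RN} {d e : Elem CN RN K} :
    EdgeOrigin O B (roleEdge ρ d e) ↔ TreeAdjacent d e ∨
      d.2 = [] ∧ e.2 = [] ∧ ∃ ρ₀, SubRole O ρ₀ ρ ∧ ρ₀.fact d.1 e.1 ∈ B.rf := by
  cases ρ with
  | name r => rfl
  | inv r =>
    refine or_congr ⟨TreeAdjacent.symm, TreeAdjacent.symm⟩ ⟨?_, ?_⟩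
    · rintro ⟨he, hd, ρ₀, hρ, hf⟩
      exact ⟨hd, he, ρ₀.inverse, hρ.inverse, by rwa [Role.fact_inverse]⟩
    · rintro ⟨hd, he, ρ₀, hρ, hf⟩
      exact ⟨he, hd, ρ₀.inverse, hρ.inverse, by rwa [Role.fact_inverse]⟩

theorem Derivable.edgeOrigin {j : Judgment CN RN K} (h : Derivable O B j) :
    EdgeOrigin O B j := by
  obtain ⟨n, h⟩ := h
  induction h with
  | roleFact_of_mem h => exact .inr ⟨rfl, rfl, _, .refl _, h⟩
  | roleEdge_of_ri hax _ ih =>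
    refine edgeOrigin_roleEdge.2 ((edgeOrigin_roleEdge.1 ih).imp_right ?_)
    rintro ⟨hd, he, ρ₀, hρ, hf⟩
    exact ⟨hd, he, ρ₀, hρ.tail hax, hf⟩
  | roleEdge_push _ _ => exact edgeOrigin_roleEdge.2 (.inl ⟨rfl, .inl ⟨_, rfl⟩⟩)
  | _ => trivial

theorem Derivable.roleEdge_cases {ρ : Role RN} {d e : Elem CN RN K}
    (h : Derivable O B (roleEdge ρ d e)) : TreeAdjacent d e ∨
      d.2 = [] ∧ e.2 = [] ∧ ∃ ρ₀, SubRole O ρ₀ ρ ∧ ρ₀.fact d.1 e.1 ∈ B.rf :=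
  edgeOrigin_roleEdge.1 h.edgeOrigin

section Unravel

variable (O B)

noncomputable def rank (j : Judgment CN RN K) : ℕ :=
  sInf {n | DerivableIn O B n j}

/-- The constants that may stand in for the anonymous witness of `∃ρ.C` at `c` in the
unraveling. -/
def witnesses (c : K) (ρ : Role RN) (C : Conc CN RN) : Set (K × Role RN) :=
  {w | Derivable O B (.satisfied (w.1, []) C) ∧ w.2.fact c w.1 ∈ B.rf ∧ SubRole O w.2 ρ}

/-- Minimality of the rank is what lets `DerivableIn.transfers` proceed by induction on the
height of derivations. -/
noncomputable def chooseWitness (c : K) (ρ : Role RN) (C : Conc CN RN) :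
    Option (K × Role RN) :=
  open Classical in
  if h : (witnesses O B c ρ C).Nonempty then
    some (Function.argminOn (fun w => rank O B (.satisfied (w.1, []) C)) _ h)
  else none

/-- The `i`-th child of a node copying `c`. -/
noncomputable def witness (c : K) (i : Fin (ontoSize O)) : Option (K × Role RN) :=
  (lhsExistentials O)[(i : ℕ)]?.bind fun ρC => chooseWitness O B c ρC.1 ρC.2

noncomputable def walk (c : K) (l : List (Fin (ontoSize O))) : Option K :=
  l.foldlM (fun e i => (witness O B e i).map Prod.fst) c

/-- The tree below the core constant `k` is the unfolding of the witness choices from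
`root k`; its node `(k, l)` is a copy of `walk O B (root k) l`. -/
noncomputable def unravel {m : ℕ} (root : Fin m → K) :
    ABox CN RN (Fin m × List (Fin (ontoSize O))) where
  cf := {p | ∃ c, walk O B (root p.2.1) p.2.2 = some c ∧ (p.1, c) ∈ B.cf}
  rf := {t | (∃ r k k', t = (r, (k, []), (k', [])) ∧ (r, root k, root k') ∈ B.rf) ∨
    ∃ k l i c w, walk O B (root k) l = some c ∧ witness O B c i = some w ∧
      t = w.2.fact (k, l) (k, l ++ [i])}

end Unravel

theorem rank_le {n : ℕ} {j : Judgment CN RN K} (h : DerivableIn O B n j) : rank O B j ≤ n :=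
  Nat.sInf_le h

theorem derivableIn_rank {j : Judgment CN RN K} (h : Derivable O B j) :
    DerivableIn O B (rank O B j) j :=
  Nat.sInf_mem h

theorem witness_mem_rf {c : K} {i : Fin (ontoSize O)} {w : K × Role RN}
    (h : witness O B c i = some w) : w.2.fact c w.1 ∈ B.rf := by
  obtain ⟨ρC, -, hw⟩ := Option.bind_eq_some_iff.1 h
  rw [chooseWitness] at hw
  split_ifs at hw with hne
  cases hw
  exact (Function.argminOn_mem _ _ hne).2.1

theorem exists_witness {c c' : K} {ρ ρ₀ : Role RN} {C : Conc CN RN}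
    (hρC : (ρ, C) ∈ lhsExistentials O) (hc' : (c', ρ₀) ∈ witnesses O B c ρ C) :
    ∃ i w, witness O B c i = some w ∧ w ∈ witnesses O B c ρ C ∧
      rank O B (.satisfied (w.1, []) C) ≤ rank O B (.satisfied (c', []) C) := by
  obtain ⟨i, hi, hiρC⟩ := List.getElem_of_mem hρC
  refine ⟨⟨i, hi.trans_le (length_lhsExistentials_le O)⟩, _, ?_,
    Function.argminOn_mem _ _ ⟨_, hc'⟩,
    Function.argminOn_le (fun w => rank O B (.satisfied (w.1, []) C)) _ hc'⟩
  simp only [witness, List.getElem?_eq_getElem hi, hiρC, Option.bind_some, chooseWitness]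
  exact dif_pos ⟨_, hc'⟩

@[simp]
theorem walk_nil (c : K) : walk O B c [] = some c := rfl

theorem walk_append_singleton (c : K) (l : List (Fin (ontoSize O))) (i : Fin (ontoSize O)) :
    walk O B c (l ++ [i]) = (walk O B c l).bind fun e => (witness O B e i).map Prod.fst := by
  simp [walk, List.foldlM_append]

theorem walk_append_singleton_eq_some {c e : K} {l : List (Fin (ontoSize O))}
    {i : Fin (ontoSize O)} {w : K × Role RN} (hl : walk O B c l = some e)
    (hw : witness O B e i = some w) : walk O B c (l ++ [i]) = some w.1 := by
  simp [walk_append_singleton, hl, hw]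

theorem exists_witness_of_isSome_walk {c : K} {l : List (Fin (ontoSize O))}
    {i : Fin (ontoSize O)} (h : (walk O B c (l ++ [i])).isSome) :
    ∃ e w, walk O B c l = some e ∧ witness O B e i = some w := by
  rw [walk_append_singleton, Option.isSome_iff_exists] at h
  obtain ⟨_, e, hl, w, hw, -⟩ := by simpa only [Option.bind_eq_some_iff, Option.map_eq_some_iff]
    using h
  exact ⟨e, w, hl, hw⟩

theorem isSome_walk_of_append {c : K} {l : List (Fin (ontoSize O))} {i : Fin (ontoSize O)}
    (h : (walk O B c (l ++ [i])).isSome) : (walk O B c l).isSome := by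
  obtain ⟨e, -, he, -⟩ := exists_witness_of_isSome_walk h
  simp [he]

variable {m : ℕ} {root : Fin m → K}

variable (O B root) in
/-- What a derivation over `B` yields over the unraveling, at every node `u` that is a copy of
the constant below which the judgment lives. -/
def Transfers : Judgment CN RN K → Prop
  | .conceptFact d A => ∀ u, walk O B (root u.1) u.2 = some d.1 →
      Derivable O (unravel O B root) (.conceptFact (u, d.2) A)
  | .roleFact d e r => TreeAdjacent d e → ∀ u, walk O B (root u.1) u.2 = some d.1 →
      Derivable O (unravel O B root) (.roleFact (u, d.2) (u, e.2) r)
  | .satisfied d C => C.existentials ⊆ lhsExistentials O →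
      ∀ u, walk O B (root u.1) u.2 = some d.1 →
        Derivable O (unravel O B root) (.satisfied (u, d.2) C)
  | .required d C => ∀ u, walk O B (root u.1) u.2 = some d.1 →
      Derivable O (unravel O B root) (.required (u, d.2) C)

theorem transfers_roleEdge {ρ : Role RN} {d e : Elem CN RN K} :
    Transfers O B root (roleEdge ρ d e) ↔ (TreeAdjacent d e →
      ∀ u, walk O B (root u.1) u.2 = some d.1 →
        Derivable O (unravel O B root) (roleEdge ρ (u, d.2) (u, e.2))) := by
  cases ρ with
  | name r => rfl
  | inv r =>
    constructor
    · exact fun h hde u hu => h hde.symm u (hde.1 ▸ hu)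
    · exact fun h hed u hu => h hed.symm u (hed.1 ▸ hu)

theorem satisfied_ex_unravel {u : Fin m × List (Fin (ontoSize O))} {c c' : K}
    {ρ ρ₀ : Role RN} {C : Conc CN RN} (hu : walk O B (root u.1) u.2 = some c)
    (hρC : (ρ, C) ∈ lhsExistentials O) (hc' : (c', ρ₀) ∈ witnesses O B c ρ C)
    (ih : ∀ c'', rank O B (.satisfied (c'', []) C) ≤ rank O B (.satisfied (c', []) C) →
      Derivable O B (.satisfied (c'', []) C) → ∀ u', walk O B (root u'.1) u'.2 = some c'' →
        Derivable O (unravel O B root) (.satisfied (u', []) C)) :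
    Derivable O (unravel O B root) (.satisfied (u, []) (.ex ρ C)) := by
  obtain ⟨i, w, hw, ⟨hwC, -, hwρ⟩, hrank⟩ := exists_witness hρC hc'
  have hchild := walk_append_singleton_eq_some hu hw
  have hfact : w.2.fact u (u.1, u.2 ++ [i]) ∈ (unravel O B root).rf :=
    .inr ⟨_, _, _, _, _, hu, hw, rfl⟩
  exact .satisfied_ex (.roleEdge_of_subRole hwρ hfact) (ih _ hrank hwC _ hchild)

theorem DerivableIn.transfers :
    ∀ {n : ℕ} {j : Judgment CN RN K}, DerivableIn O B n j → Transfers O B root j := by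
  intro n
  induction n using Nat.strong_induction_on with
  | _ n IH =>
  intro j h
  cases h with
  | conceptFact_of_mem h => exact fun u hu => .conceptFact_of_mem ⟨_, hu, h⟩
  | roleFact_of_mem _ => exact fun hxy => absurd ⟨rfl, rfl⟩ hxy.not_core
  | conceptFact_of_required h =>
    exact fun u hu => (IH _ (Nat.lt_add_one _) h u hu).conceptFact_of_required
  | roleEdge_of_ri hax h =>
    exact transfers_roleEdge.2 fun hde u hu =>
      .roleEdge_of_ri hax (transfers_roleEdge.1 (IH _ (Nat.lt_add_one _) h) hde u hu)
  | roleEdge_push h =>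
    exact transfers_roleEdge.2 fun _ u hu => (IH _ (Nat.lt_add_one _) h u hu).roleEdge_push
  | satisfied_top => exact fun _ _ _ => .satisfied_top
  | satisfied_name h => exact fun _ u hu => .satisfied_name (IH _ (Nat.lt_add_one _) h u hu)
  | satisfied_conj h h' =>
    intro hsub u hu
    rw [Conc.existentials, List.append_subset] at hsub
    exact .satisfied_conj (IH _ (Nat.lt_add_one _) h hsub.1 u hu)
      (IH _ (Nat.lt_add_one _) h' hsub.2 u hu)
  | @satisfied_ex _ d e ρ C hde he =>
    intro hsub u hu
    rw [Conc.existentials, List.cons_subset] at hsub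
    rcases Derivable.roleEdge_cases ⟨_, hde⟩ with hadj | ⟨hd, he0, ρ₀, hρ, hf⟩
    · exact .satisfied_ex (transfers_roleEdge.1 (IH _ (Nat.lt_add_one _) hde) hadj u hu)
        (IH _ (Nat.lt_add_one _) he hsub.2 u (hadj.1 ▸ hu))
    · obtain ⟨e, _⟩ := e
      obtain rfl : _ = [] := he0
      rw [hd]
      refine satisfied_ex_unravel hu hsub.1 ⟨⟨_, he⟩, hf, hρ⟩ fun c'' hrank hc'' => ?_
      exact IH _ ((hrank.trans (rank_le he)).trans_lt (Nat.lt_add_one _))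
        (derivableIn_rank hc'') hsub.2
  | required_of_ci hax h =>
    exact fun u hu => .required_of_ci hax
      (IH _ (Nat.lt_add_one _) h (existentials_subset_lhsExistentials hax) u hu)
  | required_conj_left h => exact fun u hu => (IH _ (Nat.lt_add_one _) h u hu).required_conj_left
  | required_conj_right h =>
    exact fun u hu => (IH _ (Nat.lt_add_one _) h u hu).required_conj_right
  | required_push h => exact fun u hu => (IH _ (Nat.lt_add_one _) h u hu).required_push

theorem Derivable.transfers {j : Judgment CN RN K} (h : Derivable O B j) :
    Transfers O B root j :=
  let ⟨_, h⟩ := h; h.transfers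

theorem fact_mem_unravel_core {ρ : Role RN} {k k' : Fin m}
    (h : ρ.fact (root k) (root k') ∈ B.rf) :
    ρ.fact (k, []) (k', []) ∈ (unravel O B root).rf := by
  cases ρ
  · exact .inl ⟨_, k, k', rfl, h⟩
  · exact .inl ⟨_, k', k, rfl, h⟩

theorem Derivable.roleFact_unravel {k k' : Fin m} {d e : Elem CN RN K} {r : RN}
    (h : Derivable O B (.roleFact d e r)) (hk : root k = d.1) (hk' : root k' = e.1)
    (hkk' : d.1 = e.1 → k = k') :
    Derivable O (unravel O B root) (.roleFact ((k, []), d.2) ((k', []), e.2) r) := by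
  rcases h.roleEdge_cases (ρ := .name r) with hadj | ⟨hd, he, ρ₀, hρ, hf⟩
  · obtain rfl := hkk' hadj.1
    exact h.transfers (root := root) hadj (k, []) (by simp [hk])
  · rw [hd, he]
    rw [← hk, ← hk'] at hf
    exact .roleEdge_of_subRole hρ (fact_mem_unravel_core hf)

theorem exists_unravel_certUCQ {n : ℕ} {q : List (DLCQ CN RN n)} {a : Fin n → K}
    (hcert : certUCQ O q B a) :
    ∃ m ≤ ucqSize q, ∃ (root : Fin m → K) (core : Fin n → Fin m),
      (∀ i, root (core i) = a i) ∧ certUCQ O q (unravel O B root) fun i => (core i, []) := by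
  obtain ⟨p, hpq, π, hcat, hrat, hans⟩ := hcert _ _ isModel_model
  obtain ⟨rep, hrep, hrep_eq⟩ := Function.exists_fiber_representative fun v => (π v).1
  refine ⟨p.nv, DLCQ.nv_le_ucqSize hpq, fun v => (π v).1, fun i => rep (p.ansVar i),
    fun i => by simp [hrep, hans, Function.comp], fun J κ hJ =>
      ⟨p, hpq, fun v => homTo J κ ((rep v, []), (π v).2), fun t ht => ?_, fun t ht => ?_,
        fun i => ?_⟩⟩
  · exact Derivable.holds_homTo hJ ((hcat t ht).transfers (rep t.2, []) (by simp [hrep]))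
  · exact Derivable.holds_homTo hJ
      ((hrat t ht).roleFact_unravel (hrep _) (hrep _) (hrep_eq _ _))
  · simp [homTo, hans, Function.comp]

theorem isSome_walk_of_mem_adom {u : Fin m × List (Fin (ontoSize O))}
    (hu : u ∈ adom (unravel O B root)) : (walk O B (root u.1) u.2).isSome := by
  rcases hu with ⟨_, c, hc, -⟩ |
    ⟨r, x, y, ⟨_, k, k', ht, -⟩ | ⟨k, l, i, c, w, hc, hw, ht⟩, hux⟩
  · simp [hc]
  · simp only [Prod.mk.injEq] at ht
    rcases hux with rfl | rfl <;> simp [ht]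
  · rcases Role.fact_eq_cases ht with ⟨rfl, rfl⟩ | ⟨rfl, rfl⟩ <;>
      rcases hux with rfl | rfl <;> simp [hc, walk_append_singleton_eq_some hc hw]

theorem unravel_rf_shape {r : RN} {x y : Fin m × List (Fin (ontoSize O))}
    (h : (r, x, y) ∈ (unravel O B root).rf) : (x.2 = [] ∧ y.2 = []) ∨
      (x.1 = y.1 ∧ ((∃ i, y.2 = x.2 ++ [i]) ∨ ∃ i, x.2 = y.2 ++ [i])) := by
  rcases h with ⟨_, k, k', ht, -⟩ | ⟨k, l, i, c, w, -, -, ht⟩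
  · simp only [Prod.mk.injEq] at ht
    simp [ht]
  · rcases Role.fact_eq_cases ht with ⟨rfl, rfl⟩ | ⟨rfl, rfl⟩
    · exact .inr ⟨rfl, .inl ⟨i, rfl⟩⟩
    · exact .inr ⟨rfl, .inr ⟨i, rfl⟩⟩

theorem exists_fact_mem_unravel_parent {k : Fin m} {l : List (Fin (ontoSize O))}
    {i : Fin (ontoSize O)} (h : (walk O B (root k) (l ++ [i])).isSome) :
    ∃ r, (r, (k, l), (k, l ++ [i])) ∈ (unravel O B root).rf ∨
      (r, (k, l ++ [i]), (k, l)) ∈ (unravel O B root).rf := by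
  obtain ⟨c, ⟨w, ρ⟩, hl, hw⟩ := exists_witness_of_isSome_walk h
  have hf : ρ.fact (k, l) (k, l ++ [i]) ∈ (unravel O B root).rf :=
    .inr ⟨k, l, i, c, _, hl, hw, rfl⟩
  cases ρ with
  | name r => exact ⟨r, .inl hf⟩
  | inv r => exact ⟨r, .inr hf⟩

theorem witness_of_fact_mem_unravel {ρ : Role RN} {k : Fin m} {l : List (Fin (ontoSize O))}
    {i : Fin (ontoSize O)} (h : ρ.fact (k, l) (k, l ++ [i]) ∈ (unravel O B root).rf) :
    ∃ c c', walk O B (root k) l = some c ∧ witness O B c i = some (c', ρ) := by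
  rcases h with ⟨_, k₁, k₂, ht, -⟩ | ⟨k', l', i', c, w, hc, hw, ht⟩
  · cases ρ <;> simp [Role.fact] at ht
  · obtain ⟨rfl, rfl, rfl, rfl⟩ := Role.fact_parent_child_inj ht
    exact ⟨c, w.1, hc, hw⟩

theorem eq_of_fact_mem_unravel {ρ σ : Role RN} {k : Fin m} {l : List (Fin (ontoSize O))}
    {i : Fin (ontoSize O)} (hρ : ρ.fact (k, l) (k, l ++ [i]) ∈ (unravel O B root).rf)
    (hσ : σ.fact (k, l) (k, l ++ [i]) ∈ (unravel O B root).rf) : ρ = σ := by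
  obtain ⟨c, _, hc, hw⟩ := witness_of_fact_mem_unravel hρ
  obtain ⟨c', _, hc', hw'⟩ := witness_of_fact_mem_unravel hσ
  obtain rfl : c = c' := Option.some_injective _ (hc.symm.trans hc')
  exact (Prod.mk.inj (Option.some_injective _ (hw.symm.trans hw'))).2

variable (O B root) in
noncomputable def unravelHom (u : Fin m × List (Fin (ontoSize O))) : K :=
  (walk O B (root u.1) u.2).getD (root u.1)

theorem unravelHom_mem_cf {p : CN × (Fin m × List (Fin (ontoSize O)))}
    (h : p ∈ (unravel O B root).cf) : (p.1, unravelHom O B root p.2) ∈ B.cf := by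
  obtain ⟨c, hc, hp⟩ := h
  simpa [unravelHom, hc] using hp

theorem unravelHom_mem_rf {t : RN × (Fin m × List (Fin (ontoSize O))) ×
    (Fin m × List (Fin (ontoSize O)))} (h : t ∈ (unravel O B root).rf) :
    (t.1, unravelHom O B root t.2.1, unravelHom O B root t.2.2) ∈ B.rf := by
  rcases h with ⟨_, k, k', rfl, hf⟩ | ⟨k, l, i, c, w, hc, hw, rfl⟩
  · exact hf
  · have hf := witness_mem_rf hw
    rwa [← Role.fact_map (unravelHom O B root), unravelHom, unravelHom, hc,
      walk_append_singleton_eq_some hc hw]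

end Chase

/-- The constants of `A'` are pairs `(k, l)` of one of `m` core constants and a word `l` over
`Fin |O|`, the node of the tree below `k` reached along `l`; `(k, [])` is `k` itself. -/
theorem unravel_into_pseudo_tree (CN RN C : Type) (O : List (Ax CN RN)) (n : ℕ)
    (q : List (DLCQ CN RN n)) (A : ABox CN RN C) (a : Fin n → C)
    (hcert : certUCQ O q A a) :
    ∃ m : ℕ, m ≤ ucqSize q ∧
    ∃ (T : Fin m → Set (List (Fin (ontoSize O))))
      (A' : ABox CN RN (Fin m × List (Fin (ontoSize O))))
      (a' : Fin n → Fin m × List (Fin (ontoSize O))),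
      -- tree domains are prefix-closed and contain the root
      (∀ k, [] ∈ T k ∧ ∀ (l : List (Fin (ontoSize O))) i, l ++ [i] ∈ T k → l ∈ T k) ∧
      -- all constants used in A' belong to the respective tree domain
      (∀ c ∈ adom A', c.2 ∈ T c.1) ∧
      -- role facts are core-core or parent-child within one tree
      (∀ (r : RN) x y, (r, x, y) ∈ A'.rf →
        (x.2 = [] ∧ y.2 = []) ∨
        (x.1 = y.1 ∧ ((∃ i, y.2 = x.2 ++ [i]) ∨ ∃ i, x.2 = y.2 ++ [i]))) ∧
      -- each tree node is connected to its parent by a role fact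
      (∀ k (l : List (Fin (ontoSize O))) i, l ++ [i] ∈ T k →
        ∃ r : RN, (r, (k, l), (k, l ++ [i])) ∈ A'.rf ∨ (r, (k, l ++ [i]), (k, l)) ∈ A'.rf) ∧
      -- no multi-edges within the trees (in either direction)
      (∀ k (l : List (Fin (ontoSize O))) i (r s : RN),
        (r, (k, l), (k, l ++ [i])) ∈ A'.rf → (s, (k, l), (k, l ++ [i])) ∈ A'.rf → r = s) ∧
      (∀ k (l : List (Fin (ontoSize O))) i (r s : RN),
        (r, (k, l), (k, l ++ [i])) ∈ A'.rf → (s, (k, l ++ [i]), (k, l)) ∈ A'.rf → False) ∧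
      (∀ k (l : List (Fin (ontoSize O))) i (r s : RN),
        (r, (k, l ++ [i]), (k, l)) ∈ A'.rf → (s, (k, l ++ [i]), (k, l)) ∈ A'.rf → r = s) ∧
      -- the tuple a' lies in the core
      (∀ i, (a' i).2 = []) ∧
      -- a' is a certain answer to the OMQ on A'
      certUCQ O q A' a' ∧
      -- A' maps homomorphically to A, with a' ↦ a
      ∃ h : Fin m × List (Fin (ontoSize O)) → C,
        (∀ p ∈ A'.cf, (p.1, h p.2) ∈ A.cf) ∧
        (∀ t ∈ A'.rf, (t.1, h t.2.1, h t.2.2) ∈ A.rf) ∧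
        ∀ i, h (a' i) = a i := by
  open Chase in
  obtain ⟨m, hm, root, core, hcore, hcert'⟩ := exists_unravel_certUCQ hcert
  refine ⟨m, hm, fun k => {l | (walk O A (root k) l).isSome}, unravel O A root,
    fun i => (core i, []), fun _ => ⟨rfl, fun _ _ => isSome_walk_of_append⟩,
    fun _ => isSome_walk_of_mem_adom, fun _ _ _ => unravel_rf_shape,
    fun _ _ _ => exists_fact_mem_unravel_parent,
    fun _ _ _ r s h h' =>
      Role.name.inj (eq_of_fact_mem_unravel (ρ := .name r) (σ := .name s) h h'),
    fun _ _ _ r s h h' => (nomatch eq_of_fact_mem_unravel (ρ := .name r) (σ := .inv s) h h'),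
    fun _ _ _ r s h h' =>
      Role.inv.inj (eq_of_fact_mem_unravel (ρ := .inv r) (σ := .inv s) h h'),
    fun _ => rfl, hcert', unravelHom O A root, fun _ => unravelHom_mem_cf,
    fun _ => unravelHom_mem_rf, hcore⟩
end

section
/- Let O be an FO ontology, M a set of GAV mappings, q_s a UCQ over the source schema S, and q_t a UCQ over sch(M). Then the verification problem instance (is q_t a realization of q_s?) and the expressibility problem are related by: q_s is UCQ-expressible in (O,M,S) if and only if M(q_s) is a realization of q_s in (O,M,S). Hence expressibility reduces in polynomial time to verification. -/
theorem expressible_iff_applyM_realization (S T : Schema) (n : ℕ) (O : Ontology T)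
    (M : Set (GAV S T)) (qs : UCQ S n) :
    (∃ qt : UCQ T n, IsRealization O M qs qt) ↔
      IsRealization O M qs (applyMUCQ M qs) := by
  constructor
  · rintro ⟨qt, hqt⟩
    intro C D t
    constructor
    · rintro ⟨p, hp, h, hhom, hans⟩
      intro E I ι hι hO
      refine ⟨applyMCQ M p, ⟨p, hp, rfl⟩, ι ∘ h, ?_, ?_⟩
      · rintro a ⟨m, hm, g, hg, rfl⟩
        exact hι _ ⟨m, hm, h ∘ g, fun b hb => hhom _ (hg b hb), rfl⟩
      · funext i
        simp [Function.comp, applyMCQ]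
        exact congrFun hans i ▸ rfl
    · intro hcert
      apply (hqt C D t).mpr
      intro E I ι hι hO
      obtain ⟨pq, ⟨p, hp, rfl⟩, h, hhom, hans⟩ := hcert E I ι hι hO
      have hsat : ucqAns qs p.atoms p.ansVar :=
        ⟨p, hp, id, fun a ha => ha, rfl⟩
      have := ((hqt p.V p.atoms p.ansVar).mp hsat) E I h hhom hO
      exact hans ▸ this
  · intro h
    exact ⟨_, h⟩
end
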